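/- Let d ≥ 2, let ℓ₁,…,ℓ_d be linear forms on ℝⁿ, let e ∈ ℝⁿ satisfy ℓᵢ(e) = 1 for all i, and set p(x) = ℓ₁(x)·ℓ₂(x)⋯ℓ_d(x). For x ∈ ℝⁿ define the (d−1)×(d−1) matrix M(x) with M(x)ᵢᵢ = ℓᵢ(x) + ℓ_d(x) and M(x)ᵢⱼ = ℓ_d(x) for i ≠ j. Then det M(x) = ⟨∇p(x), e⟩ = E_{d−1}(ℓ₁(x),…,ℓ_d(x)) as an identity of polynomials in x; that is, the first polar of the product of linear forms has a symmetric determinantal representation given by M(x). -/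

import Mathlib

/-
Write `a i = ℓᵢ(x)` for `i < d` and `b = ℓ_d(x)`, so that `M(x) = diag(a) + b 𝟙𝟙ᵀ`. When every
`aᵢ ≠ 0` the matrix determinant lemma gives `det M(x) = ∏ a · (1 + b ∑ 1/aᵢ)`, i.e.
`∏ a + b ∑ⱼ ∏_{i ≠ j} aᵢ`; both sides are continuous in `a`, so this extends to all `a` by density.
The right-hand side is `∑ᵢ ∏_{j ≠ i} ℓⱼ(x)`, which is `E_{d-1}` (the `(d-1)`-subsets of a `d`-set
are the complements of points) and, since `ℓᵢ(e) = 1`, also the product-rule expansion of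
`⟨∇p(x), e⟩`.
-/

/-- The `k`-th elementary symmetric function of `y : Fin d → ℝ`. -/
noncomputable def esymm {d : ℕ} (k : ℕ) (y : Fin d → ℝ) : ℝ :=
  ∑ s ∈ Finset.powersetCard k (Finset.univ : Finset (Fin d)), ∏ i ∈ s, y i

open Matrix Finset

theorem Matrix.of_ite_add_const {n α : Type*} [DecidableEq n] [AddZeroClass α] (a : n → α)
    (b : α) : of (fun i j => if i = j then a i + b else b) = diagonal a + of fun _ _ => b := by
  ext i j
  by_cases h : i = j <;> simp [h]

theorem Matrix.det_diagonal_add_const_of_ne_zero {n K : Type*} [Fintype n] [DecidableEq n]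
    [Field K] {a : n → K} (ha : ∀ i, a i ≠ 0) (b : K) :
    (diagonal a + of fun _ _ => b).det = ∏ i, a i + b * ∑ j, ∏ i ∈ univ.erase j, a i := by
  have hconst : (of fun _ _ => b : Matrix n n K) =
      replicateCol Unit (fun _ : n => b) * replicateRow Unit (fun _ : n => (1 : K)) := by
    ext; simp [replicateCol, replicateRow, Matrix.mul_apply]
  have hunit : IsUnit (diagonal a).det := by
    simpa [det_diagonal, isUnit_iff_ne_zero, prod_ne_zero_iff] using ha
  have hinv : (diagonal a)⁻¹ = diagonal fun i => (a i)⁻¹ :=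
    inv_eq_left_inv (by simp [diagonal_mul_diagonal, ha])
  have herase : ∀ j, ∏ i ∈ univ.erase j, a i = (∏ i, a i) / a j := fun j =>
    eq_div_of_mul_eq (ha j) (prod_erase_mul _ _ (mem_univ j))
  rw [hconst, det_add_replicateCol_mul_replicateRow hunit, hinv]
  simp [det_unique, det_diagonal, Matrix.mul_apply, diagonal_apply, herase, mul_add, mul_sum]
  refine sum_congr rfl fun i _ => ?_
  field_simp

theorem Matrix.det_diagonal_add_const {n 𝕜 : Type*} [Fintype n] [DecidableEq n]
    [NontriviallyNormedField 𝕜] (a : n → 𝕜) (b : 𝕜) :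
    (diagonal a + of fun _ _ => b).det = ∏ i, a i + b * ∑ j, ∏ i ∈ univ.erase j, a i := by
  have hdense : Dense (Set.univ.pi fun _ : n => ({0}ᶜ : Set 𝕜)) :=
    dense_pi _ fun _ _ => dense_compl_singleton 0
  refine congrFun (Continuous.ext_on hdense (f := fun a => (diagonal a + of fun _ _ => b).det)
    (g := fun a => ∏ i, a i + b * ∑ j, ∏ i ∈ univ.erase j, a i) ?_ ?_ fun a' ha' => ?_) a
  · fun_prop
  · fun_prop
  · exact det_diagonal_add_const_of_ne_zero (fun i => ha' i (Set.mem_univ i)) b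

theorem Fin.sum_prod_erase_castSucc {R : Type*} [CommSemiring R] {m : ℕ} (y : Fin (m + 1) → R) :
    ∑ i, ∏ j ∈ univ.erase i, y j =
      ∏ i : Fin m, y i.castSucc + y (last m) * ∑ j : Fin m, ∏ i ∈ univ.erase j, y i.castSucc := by
  have prod_erase_eq {k : ℕ} (f : Fin k → R) (i : Fin k) :
      ∏ j ∈ univ.erase i, f j = ∏ j, Function.update f i 1 j := by
    rw [prod_update_of_mem (mem_univ i), one_mul, sdiff_singleton_eq_erase]
  simp only [prod_erase_eq, sum_univ_castSucc, prod_univ_castSucc, mul_sum,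
    Function.update_apply_of_injective y (castSucc_injective m),
    Function.update_of_ne (castSucc_lt_last _).ne', Function.update_of_ne (castSucc_lt_last _).ne,
    Function.update_self, mul_one]
  rw [add_comm]
  exact congrArg _ (sum_congr rfl fun i _ => mul_comm _ _)

theorem Finset.sum_powersetCard_card_sub_one {α M : Type*} [DecidableEq α] [AddCommMonoid M]
    {s : Finset α} (hs : s.Nonempty) (f : Finset α → M) :
    ∑ t ∈ s.powersetCard (#s - 1), f t = ∑ i ∈ s, f (s.erase i) := by
  symm
  refine sum_bij (fun i _ => s.erase i) (fun i hi => ?_) (fun i _ j hj h => ?_) (fun t ht => ?_)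
    fun _ _ => rfl
  · simp [mem_powersetCard, erase_subset, card_erase_of_mem hi]
  · by_contra hij
    exact notMem_erase j s (h ▸ mem_erase.mpr ⟨Ne.symm hij, hj⟩)
  · obtain ⟨hts, hcard⟩ := mem_powersetCard.mp ht
    obtain ⟨i, hi⟩ : ∃ i, s \ t = {i} :=
      card_eq_one.mp (by rw [card_sdiff_of_subset hts]; have := hs.card_pos; omega)
    refine ⟨i, (mem_sdiff.mp (hi ▸ mem_singleton_self i)).1, ?_⟩
    rw [← sdiff_singleton_eq_erase, ← hi, sdiff_sdiff_eq_self hts]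

theorem esymm_card_sub_one (m : ℕ) (y : Fin (m + 1) → ℝ) :
    esymm m y = ∑ i, ∏ j ∈ univ.erase i, y j := by
  simpa [esymm] using sum_powersetCard_card_sub_one univ_nonempty fun t => ∏ j ∈ t, y j

theorem ContinuousLinearMap.fderiv_prod_apply {ι 𝕜 E : Type*} [Fintype ι] [DecidableEq ι]
    [NontriviallyNormedField 𝕜] [NormedAddCommGroup E] [NormedSpace 𝕜 E]
    (ℓ : ι → E →L[𝕜] 𝕜) (x v : E) :
    fderiv 𝕜 (fun y => ∏ i, ℓ i y) x v = ∑ i, (∏ j ∈ univ.erase i, ℓ j x) * ℓ i v := by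
  rw [(HasFDerivAt.finsetProd fun i _ => (ℓ i).hasFDerivAt).fderiv]
  simp

/-- The determinant of the matrix `M(x)` with `M(x)ᵢᵢ = ℓᵢ(x) + ℓ_d(x)` and
`M(x)ᵢⱼ = ℓ_d(x)` for `i ≠ j` equals the first polar `⟨∇p(x), e⟩` of
`p = ℓ₁ ⋯ ℓ_d`, which in turn equals `E_{d-1}(ℓ₁(x),…,ℓ_d(x))`. -/
theorem stmt1 {n d : ℕ} (hd : 2 ≤ d) (ℓ : Fin d → ((Fin n → ℝ) →ₗ[ℝ] ℝ))
    (e : Fin n → ℝ) (he : ∀ i, ℓ i e = 1) (x : Fin n → ℝ) :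
    (Matrix.of fun i j : Fin (d - 1) =>
        if i = j then
          ℓ (Fin.castLE (by omega) i) x + ℓ ⟨d - 1, by omega⟩ x
        else ℓ ⟨d - 1, by omega⟩ x).det
      = fderiv ℝ (fun y => ∏ i, ℓ i y) x e ∧
    (Matrix.of fun i j : Fin (d - 1) =>
        if i = j then
          ℓ (Fin.castLE (by omega) i) x + ℓ ⟨d - 1, by omega⟩ x
        else ℓ ⟨d - 1, by omega⟩ x).det
      = esymm (d - 1) (fun i => ℓ i x) := by
  obtain ⟨m, rfl⟩ : ∃ m, d = m + 1 := ⟨d - 1, by omega⟩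
  have hdet : (of fun i j : Fin m => if i = j then ℓ i.castSucc x + ℓ (Fin.last m) x
      else ℓ (Fin.last m) x).det = ∑ i, ∏ j ∈ univ.erase i, ℓ j x := by
    rw [of_ite_add_const, det_diagonal_add_const, Fin.sum_prod_erase_castSucc]
  have hpolar : fderiv ℝ (fun y => ∏ i, ℓ i y) x e = ∑ i, ∏ j ∈ univ.erase i, ℓ j x := by
    simpa [he] using ContinuousLinearMap.fderiv_prod_apply (fun i => (ℓ i).toContinuousLinearMap) x e
  exact ⟨hdet.trans hpolar.symm, hdet.trans (esymm_card_sub_one m _).symm⟩
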